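/- arXiv:math/0403104 — 4 statements merged into one kernel-verified Lean document; each statement's English description precedes it below -/
import Mathlib

section
/- Let T, M, L be three affinely independent points in ℝ^2 and let K be a point in the interior of the triangle TML. If X ⊆ ℝ^2 contains the interior of triangle TML, then the interiors of the triangles TMK, TLK, and MLK are pairwise distinct elements of Co(ℝ^2, X) that generate a sublattice isomorphic to the modular lattice M_3; in particular Co(ℝ^2, X) is not join-semidistributive. -/
open Set

section Helpers

variable {E : Type*} [NormedAddCommGroup E] [NormedSpace ℝ E]

/-- Regular-openness helper: for a convex set with an interior point,
the interior of the closure is contained in the interior. -/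
lemma aux_interior_closure_subset {s : Set E} (hs : Convex ℝ s) {y : E}
    (hy : y ∈ interior s) : interior (closure s) ⊆ interior s := by
  intro x hx
  obtain ⟨ε, hε, hball⟩ := Metric.mem_nhds_iff.mp (isOpen_interior.mem_nhds hx)
  set t : ℝ := ε / (2 * (‖x - y‖ + 1)) with ht_def
  have hden : (0:ℝ) < 2 * (‖x - y‖ + 1) := by positivity
  have ht : 0 < t := div_pos hε hden
  have hz : x + t • (x - y) ∈ closure s := by
    apply interior_subset
    apply hball
    simp only [Metric.mem_ball, dist_eq_norm]
    have : x + t • (x - y) - x = t • (x - y) := by abel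
    rw [this, norm_smul, Real.norm_eq_abs, abs_of_pos ht]
    rw [ht_def, div_mul_eq_mul_div, div_lt_iff₀ hden]
    nlinarith [norm_nonneg (x - y)]
  have hcombo := hs.combo_interior_closure_mem_interior hy hz
    (a := t / (1 + t)) (b := 1 / (1 + t)) (by positivity) (by positivity)
    (by field_simp; ring)
  have hxeq : (t / (1 + t)) • y + (1 / (1 + t)) • (x + t • (x - y)) = x := by
    have h1t : (1:ℝ) + t ≠ 0 := by positivity
    match_scalars <;> (field_simp; try ring)
  rwa [hxeq] at hcombo

/-- For a closed convex set with an interior point, the closure of the interior is the set. -/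
lemma aux_closure_interior {s : Set E} (hs : Convex ℝ s) (hc : IsClosed s) {y : E}
    (hy : y ∈ interior s) : closure (interior s) = s := by
  refine subset_antisymm (closure_minimal interior_subset hc) (fun x hx => ?_)
  rw [Metric.mem_closure_iff]
  intro ε hε
  set t : ℝ := min 1 (ε / (2 * (‖y - x‖ + 1))) with ht_def
  have hden : (0:ℝ) < 2 * (‖y - x‖ + 1) := by positivity
  have ht0 : 0 < t := lt_min one_pos (div_pos hε hden)
  have ht1 : t ≤ 1 := min_le_left _ _
  refine ⟨x + t • (y - x), hs.add_smul_sub_mem_interior hx hy ⟨ht0, ht1⟩, ?_⟩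
  rw [dist_eq_norm]
  have : x - (x + t • (y - x)) = (-t) • (y - x) := by
    rw [neg_smul]; abel
  rw [this, norm_smul, Real.norm_eq_abs, abs_neg, abs_of_pos ht0]
  have hle2 : t ≤ ε / (2 * (‖y - x‖ + 1)) := min_le_right _ _
  have h2 : ε / (2 * (‖y - x‖ + 1)) * ‖y - x‖ < ε := by
    rw [div_mul_eq_mul_div, div_lt_iff₀ hden]
    nlinarith [norm_nonneg (y - x)]
  nlinarith [norm_nonneg (y - x)]

/-- An affine functional nonnegative on a convex set and positive at some point of the set
is positive on the interior. -/
lemma aux_pos_on_interior {s : Set E} (f : E →ᵃ[ℝ] ℝ)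
    (hf : ∀ z ∈ s, 0 ≤ f z) {m : E} (hfm : 0 < f m) :
    ∀ x ∈ interior s, 0 < f x := by
  intro x hx
  by_contra hle
  push_neg at hle
  have hfx : f x = 0 := le_antisymm hle (hf x (interior_subset hx))
  obtain ⟨ε, hε, hball⟩ := Metric.mem_nhds_iff.mp (isOpen_interior.mem_nhds hx)
  set t : ℝ := ε / (2 * (‖m - x‖ + 1)) with ht_def
  have hden : (0:ℝ) < 2 * (‖m - x‖ + 1) := by positivity
  have ht : 0 < t := div_pos hε hden
  have hz : AffineMap.lineMap x m (-t) ∈ s := by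
    apply interior_subset
    apply hball
    simp only [Metric.mem_ball, dist_eq_norm, AffineMap.lineMap_apply_module]
    have : (1 - (-t)) • x + (-t) • m - x = (-t) • (m - x) := by
      match_scalars <;> ring
    rw [this, norm_smul, Real.norm_eq_abs, abs_neg, abs_of_pos ht]
    rw [ht_def, div_mul_eq_mul_div, div_lt_iff₀ hden]
    nlinarith [norm_nonneg (m - x)]
  have := hf _ hz
  rw [AffineMap.apply_lineMap, AffineMap.lineMap_apply_module, smul_eq_mul, smul_eq_mul,
    hfx] at this
  nlinarith

end Helpers

section Euclid

local notation "E2" => EuclideanSpace ℝ (Fin 2)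

/-- The affine span of two basis points and a point with nonzero third coordinate is `⊤`. -/
lemma aux_span_top (b : AffineBasis (Fin 3) ℝ E2) {i j k : Fin 3}
    (hij : i ≠ j) (hki : k ≠ i) (hkj : k ≠ j) (K : E2) (hpos : b.coord k K ≠ 0) :
    affineSpan ℝ ({b i, b j, K} : Set E2) = ⊤ := by
  have hbij : b i ≠ b j := fun e => hij (b.ind.injective e)
  have hnc : ¬ Collinear ℝ ({b i, b j, K} : Set E2) := by
    intro hcol
    have hKmem : K ∈ line[ℝ, b i, b j] :=
      hcol.mem_affineSpan_of_mem_of_ne (by simp) (by simp) (by simp) hbij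
    have : K - b i + b i ∈ line[ℝ, b i, b j] := by simpa using hKmem
    rw [show K - b i + b i = (K - b i) +ᵥ b i from rfl,
      vadd_left_mem_affineSpan_pair] at this
    obtain ⟨r, hr⟩ := this
    have hKeq : K = AffineMap.lineMap (b i) (b j) r := by
      rw [AffineMap.lineMap_apply]
      have : r • (b j -ᵥ b i) = K - b i := hr
      rw [this]
      simp [vsub_eq_sub, vadd_eq_add]
    have : b.coord k K = 0 := by
      rw [hKeq, AffineMap.apply_lineMap, b.coord_apply_ne hki, b.coord_apply_ne hkj]
      simp
    exact hpos this
  have hrange : Set.range ![b i, b j, K] = ({b i, b j, K} : Set E2) := by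
    simp only [Matrix.range_cons, Matrix.range_empty, Set.union_empty]
    ext x; simp; tauto
  have hai : AffineIndependent ℝ ![b i, b j, K] :=
    affineIndependent_iff_not_collinear.mpr (by rwa [hrange])
  have hcard : Fintype.card (Fin 3) = Module.finrank ℝ E2 + 1 := by
    simp [finrank_euclideanSpace]
  have htop := hai.affineSpan_eq_top_iff_card_eq_finrank_add_one.mpr hcard
  rwa [hrange] at htop

end Euclid



/-- `Y` is a relatively convex subset of `X`: `Y = conv(Y) ∩ X`. -/
def relConvex (X Y : Set (EuclideanSpace ℝ (Fin 2))) : Prop :=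
  Y = convexHull ℝ Y ∩ X

/-- The join in the lattice `Co(ℝ², X)`: `A ∨ B = conv(A ∪ B) ∩ X`. -/
def coJoin (X A B : Set (EuclideanSpace ℝ (Fin 2))) : Set (EuclideanSpace ℝ (Fin 2)) :=
  convexHull ℝ (A ∪ B) ∩ X

set_option maxHeartbeats 1000000 in
/-- Let `T, M, L` be affinely independent points of `ℝ²`, `K` a point of the interior of
the triangle `TML`, and suppose `X` contains the interior of the triangle `TML`. Then the
interiors of the triangles `TMK`, `TLK`, `MLK` are pairwise distinct relatively convex
subsets of `X` with pairwise equal meets and pairwise equal joins (so they generate a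
copy of `M₃`), and join-semidistributivity fails at them:
`A ∨ B = A ∨ C` but `A ∨ (B ∧ C) ≠ A ∨ B`. -/
theorem m3_in_Co_of_interior_triangle (T M L K : EuclideanSpace ℝ (Fin 2))
    (h : AffineIndependent ℝ ![T, M, L])
    (hK : K ∈ interior (convexHull ℝ {T, M, L}))
    (X : Set (EuclideanSpace ℝ (Fin 2)))
    (hX : interior (convexHull ℝ {T, M, L}) ⊆ X) :
    let A := interior (convexHull ℝ {T, M, K})
    let B := interior (convexHull ℝ {T, L, K})
    let C := interior (convexHull ℝ {M, L, K})
    relConvex X A ∧ relConvex X B ∧ relConvex X C ∧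
    A ≠ B ∧ A ≠ C ∧ B ≠ C ∧
    A ∩ B = A ∩ C ∧ A ∩ B = B ∩ C ∧
    coJoin X A B = coJoin X A C ∧ coJoin X A B = coJoin X B C ∧
    coJoin X A (B ∩ C) ≠ coJoin X A B := by
  intro A B C
  classical
  -- the ambient triangle and its interior
  set sTML : Set (EuclideanSpace ℝ (Fin 2)) := convexHull ℝ {T, M, L} with hsTML
  set W : Set (EuclideanSpace ℝ (Fin 2)) := interior sTML with hW
  -- the affine basis given by T, M, L
  have hcard : Fintype.card (Fin 3) = Module.finrank ℝ (EuclideanSpace ℝ (Fin 2)) + 1 := by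
    simp [finrank_euclideanSpace]
  have htot : affineSpan ℝ (Set.range ![T, M, L]) = ⊤ :=
    h.affineSpan_eq_top_iff_card_eq_finrank_add_one.mpr hcard
  let b : AffineBasis (Fin 3) ℝ (EuclideanSpace ℝ (Fin 2)) := ⟨![T, M, L], h, htot⟩
  have hrange : Set.range ⇑b = {T, M, L} := by
    show Set.range ![T, M, L] = _
    simp only [Matrix.range_cons, Matrix.range_empty, Set.union_empty]
    ext x; simp; tauto
  have hKpos : ∀ i, 0 < b.coord i K := by
    have hic := b.interior_convexHull
    rw [hrange] at hic
    have hKW : K ∈ interior (convexHull ℝ ({T, M, L} : Set (EuclideanSpace ℝ (Fin 2)))) := hK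
    rw [hic] at hKW
    exact hKW
  -- coordinate values at the vertices
  have hc00 : b.coord 0 T = 1 := b.coord_apply_eq (i := 0)
  have hc01 : b.coord 0 M = 0 := b.coord_apply_ne (i := 0) (j := 1) (by decide)
  have hc02 : b.coord 0 L = 0 := b.coord_apply_ne (i := 0) (j := 2) (by decide)
  have hc10 : b.coord 1 T = 0 := b.coord_apply_ne (i := 1) (j := 0) (by decide)
  have hc11 : b.coord 1 M = 1 := b.coord_apply_eq (i := 1)
  have hc12 : b.coord 1 L = 0 := b.coord_apply_ne (i := 1) (j := 2) (by decide)
  have hc20 : b.coord 2 T = 0 := b.coord_apply_ne (i := 2) (j := 0) (by decide)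
  have hc21 : b.coord 2 M = 0 := b.coord_apply_ne (i := 2) (j := 1) (by decide)
  have hc22 : b.coord 2 L = 1 := b.coord_apply_eq (i := 2)
  -- membership of the points in the big triangle
  have hTmem : T ∈ sTML := subset_convexHull ℝ _ (by simp)
  have hMmem : M ∈ sTML := subset_convexHull ℝ _ (by simp)
  have hLmem : L ∈ sTML := subset_convexHull ℝ _ (by simp)
  have hKmem : K ∈ sTML := interior_subset hK
  -- the three small triangles
  set sA : Set (EuclideanSpace ℝ (Fin 2)) := convexHull ℝ {T, M, K} with hsA
  set sB : Set (EuclideanSpace ℝ (Fin 2)) := convexHull ℝ {T, L, K} with hsB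
  set sC : Set (EuclideanSpace ℝ (Fin 2)) := convexHull ℝ {M, L, K} with hsC
  have hsubA : sA ⊆ sTML := convexHull_min (by
    rintro x (rfl | rfl | rfl) <;> assumption) (convex_convexHull ℝ _)
  have hsubB : sB ⊆ sTML := convexHull_min (by
    rintro x (rfl | rfl | rfl) <;> assumption) (convex_convexHull ℝ _)
  have hsubC : sC ⊆ sTML := convexHull_min (by
    rintro x (rfl | rfl | rfl) <;> assumption) (convex_convexHull ℝ _)
  have hAW : A ⊆ W := interior_mono hsubA
  have hBW : B ⊆ W := interior_mono hsubB
  have hCW : C ⊆ W := interior_mono hsubC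
  have hAX : A ⊆ X := hAW.trans hX
  have hBX : B ⊆ X := hBW.trans hX
  have hCX : C ⊆ X := hCW.trans hX
  -- nonemptiness of the interiors
  have hAne : A.Nonempty := by
    rw [show A = interior (convexHull ℝ {b 0, b 1, K}) from rfl]
    exact interior_convexHull_nonempty_iff_affineSpan_eq_top.mpr
      (aux_span_top b (by decide) (by decide) (by decide) K (hKpos 2).ne')
  have hBne : B.Nonempty := by
    rw [show B = interior (convexHull ℝ {b 0, b 2, K}) from rfl]
    exact interior_convexHull_nonempty_iff_affineSpan_eq_top.mpr
      (aux_span_top b (by decide) (by decide) (by decide) K (hKpos 1).ne')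
  have hCne : C.Nonempty := by
    rw [show C = interior (convexHull ℝ {b 1, b 2, K}) from rfl]
    exact interior_convexHull_nonempty_iff_affineSpan_eq_top.mpr
      (aux_span_top b (by decide) (by decide) (by decide) K (hKpos 0).ne')
  -- separating affine functionals
  have hfeval : ∀ (u v : ℝ) (i j : Fin 3) (x : EuclideanSpace ℝ (Fin 2)),
      (u • b.coord i - v • b.coord j) x = u * b.coord i x - v * b.coord j x := by
    intro u v i j x
    simp [AffineMap.coe_sub, AffineMap.coe_smul, Pi.sub_apply, Pi.smul_apply, smul_eq_mul]
  -- disjointness of A and B via f₁ = c•coord₁ - b•coord₂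
  have hdisjAB : A ∩ B = ∅ := by
    set f : EuclideanSpace ℝ (Fin 2) →ᵃ[ℝ] ℝ := (b.coord 2 K) • b.coord 1 - (b.coord 1 K) • b.coord 2 with hf
    have hfpos : ∀ z ∈ sA, 0 ≤ f z := by
      apply convexHull_min ?_ ((convex_Ici (0:ℝ)).affine_preimage f)
      rintro x (rfl | rfl | rfl) <;>
        simp only [Set.mem_preimage, Set.mem_Ici, hf, hfeval, hc10, hc11, hc12, hc20, hc21, hc22]
      · nlinarith
      · nlinarith [hKpos 2]
      · nlinarith
    have hfneg : ∀ z ∈ sB, 0 ≤ (-f) z := by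
      apply convexHull_min ?_ ((convex_Ici (0:ℝ)).affine_preimage (-f))
      rintro x (rfl | rfl | rfl) <;>
        simp only [Set.mem_preimage, Set.mem_Ici, AffineMap.coe_neg, Pi.neg_apply, hf, hfeval,
          hc10, hc11, hc12, hc20, hc21, hc22]
      · nlinarith
      · nlinarith [hKpos 1]
      · nlinarith
    have hfM : 0 < f M := by
      simp only [hf, hfeval, hc11, hc21]
      nlinarith [hKpos 2]
    have hfL : 0 < (-f) L := by
      simp only [AffineMap.coe_neg, Pi.neg_apply, hf, hfeval, hc12, hc22]
      nlinarith [hKpos 1]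
    ext x
    simp only [Set.mem_inter_iff, Set.mem_empty_iff_false, iff_false, not_and]
    intro hxA hxB
    have h1 := aux_pos_on_interior f hfpos hfM x hxA
    have h2 := aux_pos_on_interior (-f) hfneg hfL x hxB
    simp only [AffineMap.coe_neg, Pi.neg_apply] at h2
    linarith
  -- disjointness of A and C via f₂ = c•coord₀ - a•coord₂
  have hdisjAC : A ∩ C = ∅ := by
    set f : EuclideanSpace ℝ (Fin 2) →ᵃ[ℝ] ℝ := (b.coord 2 K) • b.coord 0 - (b.coord 0 K) • b.coord 2 with hf
    have hfpos : ∀ z ∈ sA, 0 ≤ f z := by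
      apply convexHull_min ?_ ((convex_Ici (0:ℝ)).affine_preimage f)
      rintro x (rfl | rfl | rfl) <;>
        simp only [Set.mem_preimage, Set.mem_Ici, hf, hfeval, hc00, hc01, hc02, hc20, hc21, hc22]
      · nlinarith [hKpos 2]
      · nlinarith
      · nlinarith
    have hfneg : ∀ z ∈ sC, 0 ≤ (-f) z := by
      apply convexHull_min ?_ ((convex_Ici (0:ℝ)).affine_preimage (-f))
      rintro x (rfl | rfl | rfl) <;>
        simp only [Set.mem_preimage, Set.mem_Ici, AffineMap.coe_neg, Pi.neg_apply, hf, hfeval,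
          hc00, hc01, hc02, hc20, hc21, hc22]
      · nlinarith
      · nlinarith [hKpos 0]
      · nlinarith
    have hfT : 0 < f T := by
      simp only [hf, hfeval, hc00, hc20]
      nlinarith [hKpos 2]
    have hfL : 0 < (-f) L := by
      simp only [AffineMap.coe_neg, Pi.neg_apply, hf, hfeval, hc02, hc22]
      nlinarith [hKpos 0]
    ext x
    simp only [Set.mem_inter_iff, Set.mem_empty_iff_false, iff_false, not_and]
    intro hxA hxC
    have h1 := aux_pos_on_interior f hfpos hfT x hxA
    have h2 := aux_pos_on_interior (-f) hfneg hfL x hxC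
    simp only [AffineMap.coe_neg, Pi.neg_apply] at h2
    linarith
  -- disjointness of B and C via f₃ = b•coord₀ - a•coord₁
  have hdisjBC : B ∩ C = ∅ := by
    set f : EuclideanSpace ℝ (Fin 2) →ᵃ[ℝ] ℝ := (b.coord 1 K) • b.coord 0 - (b.coord 0 K) • b.coord 1 with hf
    have hfpos : ∀ z ∈ sB, 0 ≤ f z := by
      apply convexHull_min ?_ ((convex_Ici (0:ℝ)).affine_preimage f)
      rintro x (rfl | rfl | rfl) <;>
        simp only [Set.mem_preimage, Set.mem_Ici, hf, hfeval, hc00, hc01, hc02, hc10, hc11, hc12]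
      · nlinarith [hKpos 1]
      · nlinarith
      · nlinarith
    have hfneg : ∀ z ∈ sC, 0 ≤ (-f) z := by
      apply convexHull_min ?_ ((convex_Ici (0:ℝ)).affine_preimage (-f))
      rintro x (rfl | rfl | rfl) <;>
        simp only [Set.mem_preimage, Set.mem_Ici, AffineMap.coe_neg, Pi.neg_apply, hf, hfeval,
          hc00, hc01, hc02, hc10, hc11, hc12]
      · nlinarith [hKpos 0]
      · nlinarith
      · nlinarith
    have hfT : 0 < f T := by
      simp only [hf, hfeval, hc00, hc10]
      nlinarith [hKpos 1]
    have hfM : 0 < (-f) M := by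
      simp only [AffineMap.coe_neg, Pi.neg_apply, hf, hfeval, hc01, hc11]
      nlinarith [hKpos 0]
    ext x
    simp only [Set.mem_inter_iff, Set.mem_empty_iff_false, iff_false, not_and]
    intro hxB hxC
    have h1 := aux_pos_on_interior f hfpos hfT x hxB
    have h2 := aux_pos_on_interior (-f) hfneg hfM x hxC
    simp only [AffineMap.coe_neg, Pi.neg_apply] at h2
    linarith
  -- the joins: conv of union of interiors of two of the triangles is W
  have key : ∀ s₁ s₂ : Set (EuclideanSpace ℝ (Fin 2)), Convex ℝ s₁ → Convex ℝ s₂ → IsClosed s₁ → IsClosed s₂ →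
      (interior s₁).Nonempty → s₁ ⊆ sTML → s₂ ⊆ sTML →
      ({T, M, L} : Set (EuclideanSpace ℝ (Fin 2))) ⊆ s₁ ∪ s₂ → s₁ ⊆ closure (interior s₁) →
      s₂ ⊆ closure (interior s₂) →
      convexHull ℝ (interior s₁ ∪ interior s₂) = W := by
    intro s₁ s₂ hc₁ hc₂ _ _ hne₁ hsub₁ hsub₂ hTML hcl₁ hcl₂
    set D : Set (EuclideanSpace ℝ (Fin 2)) := convexHull ℝ (interior s₁ ∪ interior s₂) with hD
    have hDsub : D ⊆ W := convexHull_min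
      (Set.union_subset (interior_mono hsub₁) (interior_mono hsub₂))
      (convex_convexHull ℝ _).interior
    refine subset_antisymm hDsub ?_
    have hsubD₁ : interior s₁ ⊆ D := (Set.subset_union_left).trans (subset_convexHull ℝ _)
    have hsubD₂ : interior s₂ ⊆ D := (Set.subset_union_right).trans (subset_convexHull ℝ _)
    have hclD : convexHull ℝ ({T, M, L} : Set (EuclideanSpace ℝ (Fin 2))) ⊆ closure D := by
      apply convexHull_min ?_ (convex_convexHull ℝ _).closure
      intro x hx
      rcases hTML hx with hx₁ | hx₂
      · exact closure_mono hsubD₁ (hcl₁ hx₁)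
      · exact closure_mono hsubD₂ (hcl₂ hx₂)
    obtain ⟨y, hy⟩ := hne₁
    have hyD : y ∈ interior D := interior_maximal hsubD₁ isOpen_interior hy
    calc W ⊆ interior (closure D) := interior_mono hclD
      _ ⊆ interior D := aux_interior_closure_subset (convex_convexHull ℝ _) hyD
      _ ⊆ D := interior_subset
  have hclosA : sA ⊆ closure A := by
    obtain ⟨y, hy⟩ := hAne
    rw [aux_closure_interior (convex_convexHull ℝ _)
      ((Set.finite_singleton K |>.insert M |>.insert T).isClosed_convexHull (𝕜 := ℝ)) hy]
  have hclosB : sB ⊆ closure B := by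
    obtain ⟨y, hy⟩ := hBne
    rw [aux_closure_interior (convex_convexHull ℝ _)
      ((Set.finite_singleton K |>.insert L |>.insert T).isClosed_convexHull (𝕜 := ℝ)) hy]
  have hclosC : sC ⊆ closure C := by
    obtain ⟨y, hy⟩ := hCne
    rw [aux_closure_interior (convex_convexHull ℝ _)
      ((Set.finite_singleton K |>.insert L |>.insert M).isClosed_convexHull (𝕜 := ℝ)) hy]
  have hclA : IsClosed sA := (Set.finite_singleton K |>.insert M |>.insert T).isClosed_convexHull (𝕜 := ℝ)
  have hclB : IsClosed sB := (Set.finite_singleton K |>.insert L |>.insert T).isClosed_convexHull (𝕜 := ℝ)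
  have hclC : IsClosed sC := (Set.finite_singleton K |>.insert L |>.insert M).isClosed_convexHull (𝕜 := ℝ)
  have hjoinAB : convexHull ℝ (A ∪ B) = W :=
    key sA sB (convex_convexHull ℝ _) (convex_convexHull ℝ _) hclA hclB hAne hsubA hsubB
      (by rintro x (rfl | rfl | rfl)
          · exact Or.inl (subset_convexHull ℝ _ (by simp))
          · exact Or.inl (subset_convexHull ℝ _ (by simp))
          · exact Or.inr (subset_convexHull ℝ _ (by simp)))
      hclosA hclosB
  have hjoinAC : convexHull ℝ (A ∪ C) = W :=
    key sA sC (convex_convexHull ℝ _) (convex_convexHull ℝ _) hclA hclC hAne hsubA hsubC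
      (by rintro x (rfl | rfl | rfl)
          · exact Or.inl (subset_convexHull ℝ _ (by simp))
          · exact Or.inl (subset_convexHull ℝ _ (by simp))
          · exact Or.inr (subset_convexHull ℝ _ (by simp)))
      hclosA hclosC
  have hjoinBC : convexHull ℝ (B ∪ C) = W :=
    key sB sC (convex_convexHull ℝ _) (convex_convexHull ℝ _) hclB hclC hBne hsubB hsubC
      (by rintro x (rfl | rfl | rfl)
          · exact Or.inl (subset_convexHull ℝ _ (by simp))
          · exact Or.inr (subset_convexHull ℝ _ (by simp))
          · exact Or.inr (subset_convexHull ℝ _ (by simp)))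
      hclosB hclosC
  have hWX : W ∩ X = W := Set.inter_eq_left.mpr hX
  -- convex hulls of the interiors themselves
  have hhullA : convexHull ℝ A = A := (convex_convexHull ℝ _).interior.convexHull_eq
  have hhullB : convexHull ℝ B = B := (convex_convexHull ℝ _).interior.convexHull_eq
  have hhullC : convexHull ℝ C = C := (convex_convexHull ℝ _).interior.convexHull_eq
  refine ⟨?_, ?_, ?_, ?_, ?_, ?_, ?_, ?_, ?_, ?_, ?_⟩
  · rw [relConvex, hhullA, Set.inter_eq_left.mpr hAX]
  · rw [relConvex, hhullB, Set.inter_eq_left.mpr hBX]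
  · rw [relConvex, hhullC, Set.inter_eq_left.mpr hCX]
  · intro he
    obtain ⟨x, hx⟩ := hAne
    have : x ∈ A ∩ B := ⟨hx, he ▸ hx⟩
    rw [hdisjAB] at this
    exact this
  · intro he
    obtain ⟨x, hx⟩ := hAne
    have : x ∈ A ∩ C := ⟨hx, he ▸ hx⟩
    rw [hdisjAC] at this
    exact this
  · intro he
    obtain ⟨x, hx⟩ := hBne
    have : x ∈ B ∩ C := ⟨hx, he ▸ hx⟩
    rw [hdisjBC] at this
    exact this
  · rw [hdisjAB, hdisjAC]
  · rw [hdisjAB, hdisjBC]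
  · rw [coJoin, coJoin, hjoinAB, hjoinAC]
  · rw [coJoin, coJoin, hjoinAB, hjoinBC]
  · rw [coJoin, coJoin, hdisjBC, Set.union_empty, hhullA, hjoinAB,
      Set.inter_eq_left.mpr hAX, hWX]
    intro he
    obtain ⟨x, hx⟩ := hBne
    have hxW : x ∈ W := hBW hx
    rw [← he] at hxW
    have : x ∈ A ∩ B := ⟨hxW, hx⟩
    rw [hdisjAB] at this
    exact this
end

section
/- Let A, B, C be three distinct lines in ℝ^2 passing through a common point, and let X = A ∪ B ∪ C. Then in Co(ℝ^2, X) one has A ∨ B = A ∨ C = X but A ∨ (B ∩ C) = A; consequently Co(ℝ^2, X) is not join-semidistributive. -/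
private lemma line_convex (x₀ d : EuclideanSpace ℝ (Fin 2)) :
    Convex ℝ {x : EuclideanSpace ℝ (Fin 2) | ∃ t : ℝ, x = x₀ + t • d} := by
  rintro x ⟨s, rfl⟩ y ⟨t, rfl⟩ a b _ _ hab
  refine ⟨a * s + b * t, ?_⟩
  have h : a • (x₀ + s • d) + b • (x₀ + t • d) = (a + b) • x₀ + (a * s + b * t) • d := by
    module
  rw [h, hab, one_smul]

private lemma pair_indep {dA dB : EuclideanSpace ℝ (Fin 2)} (hA : dA ≠ 0)
    (h : ∀ t : ℝ, dB ≠ t • dA) : LinearIndependent ℝ ![dA, dB] := by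
  rw [LinearIndependent.pair_iff]
  intro s t hst
  have ht : t = 0 := by
    by_contra ht
    apply h (t⁻¹ * (-s))
    have h1 : t • dB = (-s) • dA := by
      rw [neg_smul, eq_neg_iff_add_eq_zero, add_comm]; exact hst
    rw [mul_smul, ← h1, inv_smul_smul₀ ht]
  subst ht
  simp only [zero_smul, add_zero, smul_eq_zero] at hst
  exact ⟨hst.resolve_right hA, rfl⟩

private lemma hull_union_lines (x₀ : EuclideanSpace ℝ (Fin 2))
    {d e : EuclideanSpace ℝ (Fin 2)} (hd : d ≠ 0) (hne : ∀ t : ℝ, e ≠ t • d) :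
    convexHull ℝ ({x : EuclideanSpace ℝ (Fin 2) | ∃ t : ℝ, x = x₀ + t • d} ∪
      {x | ∃ t : ℝ, x = x₀ + t • e}) = Set.univ := by
  have hspan : Submodule.span ℝ (Set.range ![d, e]) = ⊤ :=
    (pair_indep hd hne).span_eq_top_of_card_eq_finrank
      (by simp [finrank_euclideanSpace_fin])
  have hrange : Set.range ![d, e] = {d, e} := by
    ext x; simp [Matrix.range_cons, Matrix.range_empty]; tauto
  rw [hrange] at hspan
  apply Set.eq_univ_of_forall
  intro v
  have hv : v - x₀ ∈ Submodule.span ℝ ({d, e} : Set (EuclideanSpace ℝ (Fin 2))) := by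
    rw [hspan]; trivial
  obtain ⟨a, b, hab⟩ := Submodule.mem_span_pair.mp hv
  have hp : x₀ + (2 * a) • d ∈ convexHull ℝ
      ({x : EuclideanSpace ℝ (Fin 2) | ∃ t : ℝ, x = x₀ + t • d} ∪
       {x | ∃ t : ℝ, x = x₀ + t • e}) :=
    subset_convexHull ℝ _ (Or.inl ⟨2 * a, rfl⟩)
  have hq : x₀ + (2 * b) • e ∈ convexHull ℝ
      ({x : EuclideanSpace ℝ (Fin 2) | ∃ t : ℝ, x = x₀ + t • d} ∪
       {x | ∃ t : ℝ, x = x₀ + t • e}) :=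
    subset_convexHull ℝ _ (Or.inr ⟨2 * b, rfl⟩)
  have h2 : (1/2 : ℝ) • (x₀ + (2 * a) • d) + (1/2 : ℝ) • (x₀ + (2 * b) • e) = v := by
    have hv' : v = x₀ + (a • d + b • e) := by
      rw [hab]; abel
    rw [hv']; module
  rw [← h2]
  exact (convex_convexHull ℝ _) hp hq (by norm_num) (by norm_num) (by norm_num)

/-- Let `A`, `B`, `C` be three distinct lines in `ℝ²` through a common point `x₀` and
`X = A ∪ B ∪ C`. Then `A`, `B`, `C` are relatively convex subsets of `X`,
`A ∨ B = A ∨ C = X`, but `A ∨ (B ∩ C) = A ≠ X`; hence `Co(ℝ², X)` is not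
join-semidistributive. -/
theorem three_lines_not_jsd (x₀ dA dB dC : EuclideanSpace ℝ (Fin 2))
    (hdA : dA ≠ 0) (hdB : dB ≠ 0) (hdC : dC ≠ 0) :
    let A : Set (EuclideanSpace ℝ (Fin 2)) := {x | ∃ t : ℝ, x = x₀ + t • dA}
    let B : Set (EuclideanSpace ℝ (Fin 2)) := {x | ∃ t : ℝ, x = x₀ + t • dB}
    let C : Set (EuclideanSpace ℝ (Fin 2)) := {x | ∃ t : ℝ, x = x₀ + t • dC}
    let X := A ∪ B ∪ C
    A ≠ B → A ≠ C → B ≠ C →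
      relConvex X A ∧ relConvex X B ∧ relConvex X C ∧
      coJoin X A B = X ∧ coJoin X A C = X ∧
      coJoin X A (B ∩ C) = A ∧ A ≠ X := by
  intro A B C X hAB hAC hBC
  -- From distinctness of lines, directions are non-parallel
  have key : ∀ (d e : EuclideanSpace ℝ (Fin 2)), e ≠ 0 →
      ({x : EuclideanSpace ℝ (Fin 2) | ∃ t : ℝ, x = x₀ + t • d} ≠
       {x | ∃ t : ℝ, x = x₀ + t • e}) → ∀ t : ℝ, e ≠ t • d := by
    intro d e he hne t ht
    apply hne
    have ht0 : t ≠ 0 := by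
      rintro rfl
      rw [zero_smul] at ht
      exact he ht
    ext x
    constructor
    · rintro ⟨s, rfl⟩
      refine ⟨s / t, ?_⟩
      rw [ht, smul_smul, div_mul_cancel₀ _ ht0]
    · rintro ⟨s, rfl⟩
      exact ⟨s * t, by rw [ht, mul_smul]⟩
  have hBA : ∀ t : ℝ, dB ≠ t • dA := key dA dB hdB hAB
  have hCA : ∀ t : ℝ, dC ≠ t • dA := key dA dC hdC hAC
  have hCB : ∀ t : ℝ, dC ≠ t • dB := key dB dC hdC hBC
  -- basic facts
  have hAX : A ⊆ X := fun x hx => Or.inl (Or.inl hx)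
  have hBX : B ⊆ X := fun x hx => Or.inl (Or.inr hx)
  have hCX : C ⊆ X := fun x hx => Or.inr hx
  have hconvA : convexHull ℝ A = A := (line_convex x₀ dA).convexHull_eq
  have hconvB : convexHull ℝ B = B := (line_convex x₀ dB).convexHull_eq
  have hconvC : convexHull ℝ C = C := (line_convex x₀ dC).convexHull_eq
  have hx₀A : x₀ ∈ A := ⟨0, by rw [zero_smul, add_zero]⟩
  refine ⟨?_, ?_, ?_, ?_, ?_, ?_, ?_⟩
  · show A = convexHull ℝ A ∩ X
    rw [hconvA, Set.inter_eq_left.mpr hAX]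
  · show B = convexHull ℝ B ∩ X
    rw [hconvB, Set.inter_eq_left.mpr hBX]
  · show C = convexHull ℝ C ∩ X
    rw [hconvC, Set.inter_eq_left.mpr hCX]
  · show convexHull ℝ (A ∪ B) ∩ X = X
    rw [hull_union_lines x₀ hdA hBA, Set.univ_inter]
  · show convexHull ℝ (A ∪ C) ∩ X = X
    rw [hull_union_lines x₀ hdA hCA, Set.univ_inter]
  · -- B ∩ C = {x₀}
    have hBC0 : B ∩ C = {x₀} := by
      ext x
      constructor
      · rintro ⟨⟨s, rfl⟩, ⟨t, hx⟩⟩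
        have hst : s • dB + (-t) • dC = 0 := by
          have : s • dB = t • dC := add_left_cancel hx
          rw [this, neg_smul, add_neg_cancel]
        have hs0 : s = 0 := ((LinearIndependent.pair_iff.mp (pair_indep hdB hCB)) s (-t) hst).1
        simp [hs0]
      · rintro rfl
        exact ⟨⟨0, by rw [zero_smul, add_zero]⟩, ⟨0, by rw [zero_smul, add_zero]⟩⟩
    show convexHull ℝ (A ∪ (B ∩ C)) ∩ X = A
    rw [hBC0, Set.union_eq_self_of_subset_right (Set.singleton_subset_iff.mpr hx₀A),
      hconvA, Set.inter_eq_left.mpr hAX]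
  · -- A ≠ X
    intro h
    have hmem : x₀ + dB ∈ X := hBX ⟨1, by rw [one_smul]⟩
    rw [← h] at hmem
    obtain ⟨t, ht⟩ := hmem
    exact hBA t (add_left_cancel ht)
end

section
/- Let a, b, c be affinely independent points of ℝ^2, and let p, m be distinct points in the open interior of triangle abc such that p, m, a are not collinear. Put X = [b,c] ∪ [p,a] ∪ [m,a], and A = [b,c], B = (p,a), C = (m,a) (open segments). Then A, B, C ∈ Co(ℝ^2, X), A ∨ B = A ∨ C = X \ {a}, and A ∨ (B ∧ C) = A; hence Co(ℝ^2, X) is not join-semidistributive even though X is a finite union of segments. -/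
lemma jsd_aux (αw βw γw αz βz γz t : ℝ) (hβw : 0 < βw) (hγw : 0 < γw)
    (hαz : 0 < αz) (hβz : 0 < βz) (hγz : 0 < γz)
    (hsw : αw + βw + γw = 1) (hsz : αz + βz + γz = 1)
    (ht0 : 0 < t) (ht1 : t ≤ 1) :
    ∃ τ lam μ : ℝ, 0 < τ ∧ τ < 1 ∧ 0 ≤ lam ∧ lam ≤ 1 ∧ 0 ≤ μ ∧ μ ≤ 1 ∧
      lam * (τ * αw + (1 - τ)) = t * αz + (1 - t) ∧
      lam * (τ * βw) + (1 - lam) * μ = t * βz ∧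
      lam * (τ * γw) + (1 - lam) * (1 - μ) = t * γz := by
  have hδ0 : 0 < min (βz / (2 * βw)) (min (γz / (2 * γw)) (1/2)) :=
    lt_min (by positivity) (lt_min (by positivity) (by norm_num))
  obtain ⟨δ, hδ0, hδβ', hδγ', hδhalf⟩ :
      ∃ δ : ℝ, 0 < δ ∧ δ ≤ βz / (2 * βw) ∧ δ ≤ γz / (2 * γw) ∧ δ ≤ 1/2 :=
    ⟨_, hδ0, min_le_left _ _, le_trans (min_le_right _ _) (min_le_left _ _),
      le_trans (min_le_right _ _) (min_le_right _ _)⟩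
  have hδβ : δ * βw ≤ βz / 2 := by
    have := (le_div_iff₀ (by positivity : (0:ℝ) < 2 * βw)).mp hδβ'
    linarith
  have hδγ : δ * γw ≤ γz / 2 := by
    have := (le_div_iff₀ (by positivity : (0:ℝ) < 2 * γw)).mp hδγ'
    linarith
  set τ : ℝ := t * δ with hτ'
  have hτ0 : 0 < τ := by positivity
  have hτ1 : τ < 1 := by nlinarith
  have hτβ : τ * βw < t * βz := by nlinarith
  have hτγ : τ * γw < t * γz := by nlinarith
  have hD0 : 0 < 1 - τ * (βw + γw) := by nlinarith
  set D : ℝ := 1 - τ * (βw + γw) with hD'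
  have hnum0 : 0 < 1 - t * (βz + γz) := by nlinarith
  set lam : ℝ := (1 - t * (βz + γz)) / D with hlam'
  have hlam0 : 0 < lam := by positivity
  have hlam1 : lam < 1 := by
    rw [hlam', div_lt_one hD0, hD']
    linarith
  have h1lam : 0 < 1 - lam := by linarith
  have hlamD : lam * D = 1 - t * (βz + γz) := by
    rw [hlam']; field_simp
  have hb' : 0 < t * βz - lam * (τ * βw) := by nlinarith [mul_lt_mul_of_pos_right hlam1 (by positivity : (0:ℝ) < τ * βw)]
  have hc' : 0 < t * γz - lam * (τ * γw) := by nlinarith [mul_lt_mul_of_pos_right hlam1 (by positivity : (0:ℝ) < τ * γw)]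
  have h1lam_eq : 1 - lam = (t * βz - lam * (τ * βw)) + (t * γz - lam * (τ * γw)) := by
    have h : lam * D = lam - lam * (τ * βw) - lam * (τ * γw) := by rw [hD']; ring
    rw [h] at hlamD
    linarith
  set μ : ℝ := (t * βz - lam * (τ * βw)) / (1 - lam) with hμ'
  have hμ0 : 0 ≤ μ := by positivity
  have hμeq : (1 - lam) * μ = t * βz - lam * (τ * βw) := by
    rw [hμ']; field_simp
  have hμ1 : μ ≤ 1 := by
    rw [hμ', div_le_one h1lam]
    linarith
  refine ⟨τ, lam, μ, hτ0, hτ1, le_of_lt hlam0, le_of_lt hlam1, hμ0, hμ1, ?_, ?_, ?_⟩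
  · have h : lam * (τ * αw + (1 - τ)) = lam * D := by
      rw [hD']; have : αw = 1 - βw - γw := by linarith
      rw [this]; ring
    rw [h, hlamD]
    have : αz = 1 - βz - γz := by linarith
    rw [this]; ring
  · rw [hμeq]; ring
  · have : (1 - lam) * (1 - μ) = (1 - lam) - (1 - lam) * μ := by ring
    rw [this, hμeq]
    linarith

/-- Let `a, b, c` be affinely independent points of `ℝ²`, and `p ≠ m` points of the
interior of the triangle `abc` with `p`, `m`, `a` not collinear. Put
`X = [b,c] ∪ [p,a] ∪ [m,a]`, `A = [b,c]`, `B = (p,a)`, `C = (m,a)`. Then `A`, `B`, `C`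
are relatively convex in `X`, `A ∨ B = A ∨ C = X \ {a}`, and `A ∨ (B ∧ C) = A`; hence
`Co(ℝ², X)` is not join-semidistributive although `X` is a finite union of segments. -/
theorem segments_example_not_jsd (a b c p m : EuclideanSpace ℝ (Fin 2))
    (habc : AffineIndependent ℝ ![a, b, c])
    (hp : p ∈ interior (convexHull ℝ {a, b, c}))
    (hm : m ∈ interior (convexHull ℝ {a, b, c}))
    (hpm : p ≠ m)
    (hpma : AffineIndependent ℝ ![p, m, a]) :
    let X := segment ℝ b c ∪ segment ℝ p a ∪ segment ℝ m a
    let A := segment ℝ b c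
    let B := openSegment ℝ p a
    let C := openSegment ℝ m a
    relConvex X A ∧ relConvex X B ∧ relConvex X C ∧
    coJoin X A B = X \ {a} ∧ coJoin X A C = X \ {a} ∧
    coJoin X A (B ∩ C) = A ∧ coJoin X A (B ∩ C) ≠ coJoin X A B := by
  intro X A B C
  classical
  -- ## Barycentric coordinate setup
  have hspan : affineSpan ℝ (Set.range ![a, b, c]) = ⊤ := by
    rw [habc.affineSpan_eq_top_iff_card_eq_finrank_add_one]
    simp
  let 𝒷 : AffineBasis (Fin 3) ℝ (EuclideanSpace ℝ (Fin 2)) := ⟨![a,b,c], habc, hspan⟩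
  have h0 : 𝒷 0 = a := rfl
  have h1 : 𝒷 1 = b := rfl
  have h2 : 𝒷 2 = c := rfl
  have hrange : Set.range (𝒷 : Fin 3 → EuclideanSpace ℝ (Fin 2)) = {a, b, c} := by
    show Set.range ![a,b,c] = _
    ext x
    simp [Matrix.range_cons, Matrix.range_empty]
    tauto
  have rep : ∀ z, 𝒷.coord 0 z • a + 𝒷.coord 1 z • b + 𝒷.coord 2 z • c = z := by
    intro z
    have := 𝒷.linear_combination_coord_eq_self z
    rwa [Fin.sum_univ_three, h0, h1, h2] at this
  have hsum : ∀ z, 𝒷.coord 0 z + 𝒷.coord 1 z + 𝒷.coord 2 z = 1 := by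
    intro z
    have := 𝒷.sum_coord_apply_eq_one z
    rwa [Fin.sum_univ_three] at this
  have hκa : 𝒷.coord 0 a = 1 := by
    have := 𝒷.coord_apply (0 : Fin 3) 0
    rwa [h0, if_pos rfl] at this
  have hκb : 𝒷.coord 0 b = 0 := by
    have := 𝒷.coord_apply (0 : Fin 3) 1
    rwa [h1, if_neg (by decide)] at this
  have hκc : 𝒷.coord 0 c = 0 := by
    have := 𝒷.coord_apply (0 : Fin 3) 2
    rwa [h2, if_neg (by decide)] at this
  have hpos : ∀ z ∈ interior (convexHull ℝ ({a, b, c} : Set (EuclideanSpace ℝ (Fin 2)))),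
      0 < 𝒷.coord 0 z ∧ 0 < 𝒷.coord 1 z ∧ 0 < 𝒷.coord 2 z := by
    intro z hz
    rw [← hrange, 𝒷.interior_convexHull] at hz
    exact ⟨hz 0, hz 1, hz 2⟩
  -- the open set `{κ < 1}` contains everything of interest except `a`
  have hκlt : ∀ z ∈ interior (convexHull ℝ ({a, b, c} : Set (EuclideanSpace ℝ (Fin 2)))),
      𝒷.coord 0 z < 1 := by
    intro z hz
    obtain ⟨_, h1', h2'⟩ := hpos z hz
    have := hsum z
    linarith
  -- ## Key lemma : points `t•z + (1-t)•a`, `0 < t ≤ 1`, lie in conv(A ∪ (w,a))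
  have key : ∀ w ∈ interior (convexHull ℝ ({a, b, c} : Set (EuclideanSpace ℝ (Fin 2)))),
      ∀ z ∈ interior (convexHull ℝ ({a, b, c} : Set (EuclideanSpace ℝ (Fin 2)))),
      ∀ t : ℝ, 0 < t → t ≤ 1 →
      t • z + (1 - t) • a ∈ convexHull ℝ (A ∪ openSegment ℝ w a) := by
    intro w hw z hz t ht0 ht1
    obtain ⟨hαw, hβw, hγw⟩ := hpos w hw
    obtain ⟨hαz, hβz, hγz⟩ := hpos z hz
    obtain ⟨τ, lam, μ, hτ0, hτ1, hlam0, hlam1, hμ0, hμ1, ea, eb, ec⟩ :=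
      jsd_aux (𝒷.coord 0 w) (𝒷.coord 1 w) (𝒷.coord 2 w)
        (𝒷.coord 0 z) (𝒷.coord 1 z) (𝒷.coord 2 z) t hβw hγw hαz hβz hγz
        (hsum w) (hsum z) ht0 ht1
    have hqB : τ • w + (1 - τ) • a ∈ openSegment ℝ w a :=
      ⟨τ, 1 - τ, hτ0, by linarith, by ring, rfl⟩
    have hyA : μ • b + (1 - μ) • c ∈ A :=
      ⟨μ, 1 - μ, hμ0, by linarith, by ring, rfl⟩
    have hmem : lam • (τ • w + (1 - τ) • a) + (1 - lam) • (μ • b + (1 - μ) • c)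
        ∈ convexHull ℝ (A ∪ openSegment ℝ w a) :=
      (convex_convexHull ℝ (A ∪ openSegment ℝ w a)).segment_subset
        (subset_convexHull ℝ (A ∪ openSegment ℝ w a) (Or.inr hqB))
        (subset_convexHull ℝ (A ∪ openSegment ℝ w a) (Or.inl hyA))
        ⟨lam, 1 - lam, hlam0, by linarith, by ring, rfl⟩
    have heq : lam • (τ • w + (1 - τ) • a) + (1 - lam) • (μ • b + (1 - μ) • c)
        = t • z + (1 - t) • a := by
      rw [← rep w, ← rep z]
      linear_combination (norm := module) ea • a + eb • b + ec • c
    rw [← heq]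
    exact hmem
  have cover : ∀ w ∈ interior (convexHull ℝ ({a, b, c} : Set (EuclideanSpace ℝ (Fin 2)))),
      ∀ z ∈ interior (convexHull ℝ ({a, b, c} : Set (EuclideanSpace ℝ (Fin 2)))),
      ∀ x ∈ segment ℝ z a, x ≠ a → x ∈ convexHull ℝ (A ∪ openSegment ℝ w a) := by
    intro w hw z hz x hx hxa
    obtain ⟨u, v, hu, hv, huv, hx⟩ := hx
    rcases eq_or_lt_of_le hu with h | h
    · exfalso
      apply hxa
      rw [← hx, ← h, zero_smul, zero_add, show v = 1 by linarith, one_smul]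
    · have := key w hw z hz u h (by linarith)
      rwa [show (1 : ℝ) - u = v by linarith, hx] at this
  have hanot : ∀ w ∈ interior (convexHull ℝ ({a, b, c} : Set (EuclideanSpace ℝ (Fin 2)))),
      a ∉ convexHull ℝ (A ∪ openSegment ℝ w a) := by
    intro w hw ha
    have hsub : convexHull ℝ (A ∪ openSegment ℝ w a) ⊆ (𝒷.coord 0) ⁻¹' (Set.Iio 1) := by
      apply convexHull_min _ ((convex_Iio (1:ℝ)).affine_preimage (𝒷.coord 0))
      rintro x (⟨u, v, hu, hv, huv, rfl⟩ | ⟨u, v, hu, hv, huv, rfl⟩)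
      · show 𝒷.coord 0 _ < 1
        rw [Convex.combo_affine_apply huv]
        simp only [smul_eq_mul, hκb, hκc]
        norm_num
      · show 𝒷.coord 0 _ < 1
        rw [Convex.combo_affine_apply huv]
        simp only [smul_eq_mul, hκa]
        have := hκlt w hw
        nlinarith
    have := hsub ha
    rw [Set.mem_preimage, hκa] at this
    exact lt_irrefl 1 (Set.mem_Iio.mp this)
  -- `X` membership facts
  have hAX : A ⊆ X := fun x hx => Or.inl (Or.inl hx)
  have hpaX : segment ℝ p a ⊆ X := fun x hx => Or.inl (Or.inr hx)
  have hmaX : segment ℝ m a ⊆ X := fun x hx => Or.inr hx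
  have hBX : B ⊆ X := fun x hx => hpaX (openSegment_subset_segment ℝ p a hx)
  have hCX : C ⊆ X := fun x hx => hmaX (openSegment_subset_segment ℝ m a hx)
  -- ## the join computations
  have main : ∀ w ∈ interior (convexHull ℝ ({a, b, c} : Set (EuclideanSpace ℝ (Fin 2)))),
      coJoin X A (openSegment ℝ w a) = X \ {a} := by
    intro w hw
    ext x
    constructor
    · rintro ⟨hxh, hxX⟩
      refine ⟨hxX, ?_⟩
      intro h
      rw [Set.mem_singleton_iff] at h
      subst h
      exact hanot w hw hxh
    · rintro ⟨hxX, hxa⟩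
      rw [Set.mem_singleton_iff] at hxa
      refine ⟨?_, hxX⟩
      rcases hxX with (hx | hx) | hx
      · exact subset_convexHull ℝ _ (Or.inl hx)
      · exact cover w hw p hp x hx hxa
      · exact cover w hw m hm x hx hxa
  have hAeq : convexHull ℝ A = A := (convex_segment b c).convexHull_eq
  -- `B ∩ C = ∅`
  have hBC : B ∩ C = (∅ : Set (EuclideanSpace ℝ (Fin 2))) := by
    ext x
    simp only [Set.mem_inter_iff, Set.mem_empty_iff_false, iff_false]
    rintro ⟨⟨u, v, hu, hv, huv, hx⟩, ⟨u', v', hu', hv', huv', hx'⟩⟩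
    have := affineIndependent_iff.mp hpma Finset.univ ![u, -u', v - v']
      (by simp [Fin.sum_univ_three]; linarith)
      (by
        simp only [Fin.sum_univ_three, Matrix.cons_val_zero, Matrix.cons_val_one,
          Matrix.head_cons, Matrix.cons_val_two, Matrix.tail_cons]
        linear_combination (norm := module) hx - hx')
      0 (Finset.mem_univ 0)
    simp at this
    linarith
  have hjoinBC : coJoin X A (B ∩ C) = A := by
    rw [coJoin, hBC, Set.union_empty, hAeq]
    exact Set.inter_eq_left.mpr hAX
  have hjoinB : coJoin X A B = X \ {a} := main p hp
  have hjoinC : coJoin X A C = X \ {a} := main m hm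
  refine ⟨?_, ?_, ?_, hjoinB, hjoinC, hjoinBC, ?_⟩
  · rw [relConvex, hAeq]
    exact (Set.inter_eq_left.mpr hAX).symm
  · rw [relConvex, (convex_openSegment p a).convexHull_eq]
    exact (Set.inter_eq_left.mpr hBX).symm
  · rw [relConvex, (convex_openSegment m a).convexHull_eq]
    exact (Set.inter_eq_left.mpr hCX).symm
  · rw [hjoinBC, hjoinB]
    intro h
    have hpa : p ≠ a := by
      have := hpma.injective
      intro he
      exact (by decide : (0 : Fin 3) ≠ 2) (this (by simp [he] : ![p,m,a] 0 = ![p,m,a] 2))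
    have hpX : p ∈ X \ {a} := ⟨hpaX (left_mem_segment ℝ p a), by simpa using hpa⟩
    rw [← h] at hpX
    -- p ∉ A since its a-coordinate is positive
    have hsub : A ⊆ (𝒷.coord 0) ⁻¹' {0} := by
      rintro x ⟨u, v, hu, hv, huv, rfl⟩
      show 𝒷.coord 0 _ = 0
      rw [Convex.combo_affine_apply huv]
      simp [smul_eq_mul, hκb, hκc]
    have := hsub hpX
    rw [Set.mem_preimage, Set.mem_singleton_iff] at this
    exact absurd this (ne_of_gt (hpos p hp).1)
end

section
/- With ψ as above and noncomparable sets a, b ⊆ {1,...,n+1}, every point z ∈ ψ(a ∩ b) can be written as z = λx + (1-λ)y with λ ∈ (0,1), x ∈ ψ(a), and y ∈ ψ(b); in particular ψ(a ∩ b) ⊆ conv(ψ(a) ∪ ψ(b)). -/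
/-- The map `ψ`: for `t ⊆ {1,...,n+1}`, `ψ(t)` is the relative interior of the convex
hull of `{p_i : i ∉ t}`. -/
def psiFace {n : ℕ} (p : Fin (n + 1) → EuclideanSpace ℝ (Fin n))
    (t : Finset (Fin (n + 1))) : Set (EuclideanSpace ℝ (Fin n)) :=
  {x | ∃ l : Fin (n + 1) → ℝ,
    (∀ i ∈ tᶜ, 0 < l i) ∧ ∑ i ∈ tᶜ, l i = 1 ∧ x = ∑ i ∈ tᶜ, l i • p i}

lemma split_sum {ι M : Type*} [DecidableEq ι] [AddCommGroup M] [Module ℝ M]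
    (A B : Finset ι) (f : ι → M) :
    ((∑ i ∈ A, if i ∈ B then (2:ℝ)⁻¹ • f i else f i) +
      ∑ i ∈ B, if i ∈ A then (2:ℝ)⁻¹ • f i else f i) = ∑ i ∈ A ∪ B, f i := by
  rw [Finset.sum_ite, Finset.sum_ite]
  have h1 : A.filter (· ∈ B) = A ∩ B := by ext i; simp [Finset.mem_filter]
  have h2 : A.filter (¬ · ∈ B) = A \ B := by ext i; simp [Finset.mem_filter]
  have h3 : B.filter (· ∈ A) = A ∩ B := by
    ext i; simp [Finset.mem_filter, and_comm]
  have h4 : B.filter (¬ · ∈ A) = B \ A := by ext i; simp [Finset.mem_filter]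
  rw [h1, h2, h3, h4]
  have hU : A ∪ B = (A ∩ B) ∪ (A \ B) ∪ (B \ A) := by
    ext i; simp [Finset.mem_union, Finset.mem_inter, Finset.mem_sdiff]; tauto
  rw [hU, Finset.sum_union, Finset.sum_union]
  · have h5 : ∑ x ∈ A ∩ B, (2:ℝ)⁻¹ • f x + ∑ x ∈ A ∩ B, (2:ℝ)⁻¹ • f x
        = ∑ x ∈ A ∩ B, f x := by
      rw [← Finset.sum_add_distrib]
      refine Finset.sum_congr rfl fun i _ => ?_
      rw [← add_smul]; norm_num
    rw [← h5]; abel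
  · rw [Finset.disjoint_left]
    intro i hi hib
    simp [Finset.mem_inter, Finset.mem_sdiff] at hi hib
    tauto
  · rw [Finset.disjoint_left]
    intro i hi hib
    simp [Finset.mem_union, Finset.mem_inter, Finset.mem_sdiff] at hi hib
    tauto

/-- For affinely independent `p` and noncomparable `a, b ⊆ {1,...,n+1}`, every
`z ∈ ψ(a ∩ b)` can be written as `z = λx + (1-λ)y` with `λ ∈ (0,1)`, `x ∈ ψ(a)`,
`y ∈ ψ(b)`; in particular `ψ(a ∩ b) ⊆ conv(ψ(a) ∪ ψ(b))`. -/
theorem psiFace_inter_subset_convexHull {n : ℕ}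
    (p : Fin (n + 1) → EuclideanSpace ℝ (Fin n)) (hp : AffineIndependent ℝ p)
    (a b : Finset (Fin (n + 1))) (hab : ¬ a ⊆ b) (hba : ¬ b ⊆ a) :
    (∀ z ∈ psiFace p (a ∩ b), ∃ l ∈ Set.Ioo (0 : ℝ) 1, ∃ x ∈ psiFace p a,
      ∃ y ∈ psiFace p b, z = l • x + (1 - l) • y) ∧
    psiFace p (a ∩ b) ⊆ convexHull ℝ (psiFace p a ∪ psiFace p b) := by
  have hC : (a ∩ b)ᶜ = aᶜ ∪ bᶜ := by ext i; simp [Finset.mem_compl, Decidable.not_and_iff_or_not]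
  set A := aᶜ with hA
  set B := bᶜ with hB
  have hAne : A.Nonempty := by
    obtain ⟨i, hib, hia⟩ := Finset.not_subset.mp hba
    exact ⟨i, Finset.mem_compl.mpr hia⟩
  have hBne : B.Nonempty := by
    obtain ⟨i, hia, hib⟩ := Finset.not_subset.mp hab
    exact ⟨i, Finset.mem_compl.mpr hib⟩
  have main : ∀ z ∈ psiFace p (a ∩ b), ∃ l ∈ Set.Ioo (0 : ℝ) 1, ∃ x ∈ psiFace p a,
      ∃ y ∈ psiFace p b, z = l • x + (1 - l) • y := by
    rintro z ⟨l, hpos, hsum, hz⟩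
    rw [hC] at hpos hsum hz
    set α : Fin (n+1) → ℝ := fun i => if i ∈ B then (2:ℝ)⁻¹ • l i else l i with hα
    set β : Fin (n+1) → ℝ := fun i => if i ∈ A then (2:ℝ)⁻¹ • l i else l i with hβ
    set lam := ∑ i ∈ A, α i with hlamd
    set mu := ∑ i ∈ B, β i with hmud
    have hαpos : ∀ i ∈ A, 0 < α i := by
      intro i hi
      have hl := hpos i (Finset.mem_union_left _ hi)
      have he : α i = if i ∈ B then (2:ℝ)⁻¹ * l i else l i := by simp [hα, smul_eq_mul]
      rw [he]; split_ifs <;> linarith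
    have hβpos : ∀ i ∈ B, 0 < β i := by
      intro i hi
      have hl := hpos i (Finset.mem_union_right _ hi)
      have he : β i = if i ∈ A then (2:ℝ)⁻¹ * l i else l i := by simp [hβ, smul_eq_mul]
      rw [he]; split_ifs <;> linarith
    have hlam : 0 < lam := Finset.sum_pos hαpos hAne
    have hmu : 0 < mu := Finset.sum_pos hβpos hBne
    have hsplit : lam + mu = 1 := by
      rw [hlamd, hmud, hα, hβ, split_sum A B l, hsum]
    refine ⟨lam, ⟨hlam, by linarith⟩,
      ∑ i ∈ A, (lam⁻¹ * α i) • p i,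
      ⟨fun i => lam⁻¹ * α i, fun i hi => mul_pos (inv_pos.mpr hlam) (hαpos i hi),
        by rw [← Finset.mul_sum, ← hlamd, inv_mul_cancel₀ hlam.ne'], rfl⟩,
      ∑ i ∈ B, (mu⁻¹ * β i) • p i,
      ⟨fun i => mu⁻¹ * β i, fun i hi => mul_pos (inv_pos.mpr hmu) (hβpos i hi),
        by rw [← Finset.mul_sum, ← hmud, inv_mul_cancel₀ hmu.ne'], rfl⟩, ?_⟩
    have h1mu : 1 - lam = mu := by linarith
    have hx : lam • ∑ i ∈ A, (lam⁻¹ * α i) • p i = ∑ i ∈ A, α i • p i := by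
      rw [Finset.smul_sum]
      refine Finset.sum_congr rfl fun i _ => ?_
      rw [smul_smul, ← mul_assoc, mul_inv_cancel₀ hlam.ne', one_mul]
    have hy : mu • ∑ i ∈ B, (mu⁻¹ * β i) • p i = ∑ i ∈ B, β i • p i := by
      rw [Finset.smul_sum]
      refine Finset.sum_congr rfl fun i _ => ?_
      rw [smul_smul, ← mul_assoc, mul_inv_cancel₀ hmu.ne', one_mul]
    have key : (∑ i ∈ A, α i • p i) + ∑ i ∈ B, β i • p i = ∑ i ∈ A ∪ B, l i • p i := by
      rw [← split_sum A B (fun i => l i • p i)]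
      congr 1 <;> refine Finset.sum_congr rfl fun i _ => ?_
      · by_cases h : i ∈ B <;> simp [hα, h, smul_eq_mul, mul_smul]
      · by_cases h : i ∈ A <;> simp [hβ, h, smul_eq_mul, mul_smul]
    rw [h1mu, hx, hy, key, hz]
  refine ⟨main, fun z hz => ?_⟩
  obtain ⟨l, hl, x, hx, y, hy, hzeq⟩ := main z hz
  rw [hzeq]
  have hcx : x ∈ convexHull ℝ (psiFace p a ∪ psiFace p b) :=
    subset_convexHull ℝ _ (Set.mem_union_left _ hx)
  have hcy : y ∈ convexHull ℝ (psiFace p a ∪ psiFace p b) :=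
    subset_convexHull ℝ _ (Set.mem_union_right _ hy)
  exact (convex_convexHull ℝ (psiFace p a ∪ psiFace p b)) hcx hcy hl.1.le
    (by linarith [hl.2]) (by ring)
end
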